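/- Let m, M, l, g > 0, set m̄ = m + M, let χ ∈ ℝ³ and let 𝕀 be a symmetric 3×3 real matrix. For R ∈ SO(3), y, ẏ ∈ ℝ³ and a 3×3 real matrix Ṙ, define Ω(R,Ṙ) = ((RᵀṘ)₃₂, (RᵀṘ)₁₃, (RᵀṘ)₂₁), K(Ω,v) = ½ Ω·𝕀Ω + m l v·(Ω×χ) + ½ m̄ ‖v‖², and the heavy-top Lagrangian L(R,y,Ṙ,ẏ) = K(Ω(R,Ṙ), Rᵀẏ) − m l g χ·(Rᵀe₃) − m̄ g y·e₃, where e₃ = (0,0,1). Then for R₀ ∈ SO(3) and y₀ ∈ ℝ³, the invariance L(R₀R, R₀y + y₀, R₀Ṙ, R₀ẏ) = L(R,y,Ṙ,ẏ) holds for ALL R ∈ SO(3), y, ẏ ∈ ℝ³ and 3×3 matrices Ṙ if and only if R₀ᵀe₃ = e₃ and y₀·e₃ = 0; i.e., the symmetry group of L consists exactly of the rotations about the vertical axis together with horizontal translations. -/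

import Mathlib

open Matrix

/-- Body angular velocity `Ω(R,Ṙ) = ((RᵀṘ)₃₂, (RᵀṘ)₁₃, (RᵀṘ)₂₁)`. -/
noncomputable def bodyAngVel (R Rdot : Matrix (Fin 3) (Fin 3) ℝ) : Fin 3 → ℝ :=
  ![(Rᵀ * Rdot) 2 1, (Rᵀ * Rdot) 0 2, (Rᵀ * Rdot) 1 0]

/-- Kinetic energy `K(Ω,v) = ½ Ω·𝕀Ω + m l v·(Ω×χ) + ½ m̄ ‖v‖²`. -/
noncomputable def kinEnergy (m M l : ℝ) (χ : Fin 3 → ℝ) (I : Matrix (Fin 3) (Fin 3) ℝ)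
    (Ω v : Fin 3 → ℝ) : ℝ :=
  (1 / 2) * (Ω ⬝ᵥ I *ᵥ Ω) + m * l * (v ⬝ᵥ crossProduct Ω χ) + (1 / 2) * (m + M) * (v ⬝ᵥ v)

/-- The heavy-top Lagrangian
`L(R,y,Ṙ,ẏ) = K(Ω(R,Ṙ), Rᵀẏ) − m l g χ·(Rᵀe₃) − m̄ g y·e₃`. -/
noncomputable def heavyTopL (m M l g : ℝ) (χ : Fin 3 → ℝ) (I : Matrix (Fin 3) (Fin 3) ℝ)
    (R : Matrix (Fin 3) (Fin 3) ℝ) (y : Fin 3 → ℝ) (Rdot : Matrix (Fin 3) (Fin 3) ℝ)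
    (ydot : Fin 3 → ℝ) : ℝ :=
  kinEnergy m M l χ I (bodyAngVel R Rdot) (Rᵀ *ᵥ ydot)
    - m * l * g * (χ ⬝ᵥ Rᵀ *ᵥ ![(0 : ℝ), 0, 1]) - (m + M) * g * (y ⬝ᵥ ![(0 : ℝ), 0, 1])

/-!
Left multiplication by an orthogonal `R₀` leaves `RᵀṘ` and `Rᵀẏ` unchanged, so every rigid
motion `(R₀, y₀)` preserves the kinetic energy and changes `L` only by
`m l g χ·Rᵀw + m̄ g (y·w − y₀·e₃)` with `w = e₃ − R₀ᵀe₃`. At `R = 1` this is affine in `y`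
with slope `m̄ g w`, so it vanishes for all `y` exactly when `w = 0` and `y₀·e₃ = 0`.
-/

local notation "e₃" => ![(0 : ℝ), 0, 1]

section Orthogonal

variable {k n p q α : Type*} [Fintype k] [Fintype n] [DecidableEq n] [CommSemiring α]
  {R₀ : Matrix k n α}

theorem transpose_mul_mul_of_transpose_mul_self (hR₀ : R₀ᵀ * R₀ = 1) (A : Matrix n p α)
    (B : Matrix n q α) : (R₀ * A)ᵀ * (R₀ * B) = Aᵀ * B := by
  rw [transpose_mul, Matrix.mul_assoc, ← Matrix.mul_assoc R₀ᵀ, hR₀, Matrix.one_mul]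

theorem transpose_mul_mulVec_of_transpose_mul_self [Fintype p] (hR₀ : R₀ᵀ * R₀ = 1)
    (A : Matrix n p α) (v : n → α) : (R₀ * A)ᵀ *ᵥ (R₀ *ᵥ v) = Aᵀ *ᵥ v := by
  rw [mulVec_mulVec, transpose_mul, Matrix.mul_assoc, hR₀, Matrix.mul_one]

end Orthogonal

theorem bodyAngVel_mul_left {R₀ : Matrix (Fin 3) (Fin 3) ℝ} (hR₀ : R₀ᵀ * R₀ = 1)
    (R Rdot : Matrix (Fin 3) (Fin 3) ℝ) :
    bodyAngVel (R₀ * R) (R₀ * Rdot) = bodyAngVel R Rdot := by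
  rw [bodyAngVel, transpose_mul_mul_of_transpose_mul_self hR₀, bodyAngVel]

theorem heavyTopL_mul_left (m M l g : ℝ) (χ : Fin 3 → ℝ) (I : Matrix (Fin 3) (Fin 3) ℝ)
    {R₀ : Matrix (Fin 3) (Fin 3) ℝ} (hR₀ : R₀ᵀ * R₀ = 1) (y₀ : Fin 3 → ℝ)
    (R : Matrix (Fin 3) (Fin 3) ℝ) (y : Fin 3 → ℝ) (Rdot : Matrix (Fin 3) (Fin 3) ℝ)
    (ydot : Fin 3 → ℝ) :
    heavyTopL m M l g χ I (R₀ * R) (R₀ *ᵥ y + y₀) (R₀ * Rdot) (R₀ *ᵥ ydot)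
      = heavyTopL m M l g χ I R y Rdot ydot
        + m * l * g * (χ ⬝ᵥ Rᵀ *ᵥ (e₃ - R₀ᵀ *ᵥ e₃))
        + (m + M) * g * (y ⬝ᵥ (e₃ - R₀ᵀ *ᵥ e₃) - y₀ ⬝ᵥ e₃) := by
  have hχ : χ ⬝ᵥ (R₀ * R)ᵀ *ᵥ e₃ = χ ⬝ᵥ Rᵀ *ᵥ (R₀ᵀ *ᵥ e₃) := by
    rw [transpose_mul, mulVec_mulVec]
  have hy : (R₀ *ᵥ y) ⬝ᵥ e₃ = y ⬝ᵥ R₀ᵀ *ᵥ e₃ := by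
    rw [dotProduct_comm, dotProduct_transpose_mulVec]
  rw [heavyTopL, heavyTopL, bodyAngVel_mul_left hR₀,
    transpose_mul_mulVec_of_transpose_mul_self hR₀, hχ, add_dotProduct, hy, mulVec_sub,
    dotProduct_sub, dotProduct_sub]
  ring

theorem heavyTopL_invariant_iff_general (m M l g : ℝ) (hm : 0 < m) (hM : 0 < M) (hg : 0 < g)
    (χ : Fin 3 → ℝ) (I : Matrix (Fin 3) (Fin 3) ℝ)
    (R₀ : Matrix (Fin 3) (Fin 3) ℝ) (hR₀ : R₀ᵀ * R₀ = 1)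
    (y₀ : Fin 3 → ℝ) :
    (∀ (R : Matrix (Fin 3) (Fin 3) ℝ), Rᵀ * R = 1 → R.det = 1 →
      ∀ (y : Fin 3 → ℝ) (Rdot : Matrix (Fin 3) (Fin 3) ℝ) (ydot : Fin 3 → ℝ),
        heavyTopL m M l g χ I (R₀ * R) (R₀ *ᵥ y + y₀) (R₀ * Rdot) (R₀ *ᵥ ydot)
          = heavyTopL m M l g χ I R y Rdot ydot)
    ↔ (R₀ᵀ *ᵥ ![(0 : ℝ), 0, 1] = ![(0 : ℝ), 0, 1] ∧ y₀ ⬝ᵥ ![(0 : ℝ), 0, 1] = 0) := by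
  have hmg : (m + M) * g ≠ 0 := by positivity
  constructor
  · intro hinv
    set w := e₃ - R₀ᵀ *ᵥ e₃
    have hpot : ∀ y, m * l * g * (χ ⬝ᵥ w) + (m + M) * g * (y ⬝ᵥ w - y₀ ⬝ᵥ e₃) = 0 := by
      intro y
      have h := hinv 1 (by simp) det_one y 0 0
      rw [heavyTopL_mul_left m M l g χ I hR₀, transpose_one, one_mulVec] at h
      linarith
    have hw : w = 0 := by
      refine dotProduct_self_eq_zero.mp (mul_left_cancel₀ hmg ?_)
      have h0 := hpot 0
      rw [zero_dotProduct] at h0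
      linear_combination hpot w - h0
    have hy₀ : y₀ ⬝ᵥ e₃ = 0 := by
      simpa [hw, hmg] using hpot 0
    exact ⟨(sub_eq_zero.mp hw).symm, hy₀⟩
  · rintro ⟨hvert, hy₀⟩ R - - y Rdot ydot
    simp [heavyTopL_mul_left m M l g χ I hR₀, hvert, hy₀]

/-- The symmetry group of the heavy-top Lagrangian consists exactly of the rotations
about the vertical axis together with the horizontal translations:
`(R₀,y₀) ∈ SE(3)` leaves `L` invariant iff `R₀ᵀe₃ = e₃` and `y₀·e₃ = 0`. -/
theorem heavyTopL_invariant_iff (m M l g : ℝ) (hm : 0 < m) (hM : 0 < M) (hl : 0 < l)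
    (hg : 0 < g) (χ : Fin 3 → ℝ) (I : Matrix (Fin 3) (Fin 3) ℝ) (hI : Iᵀ = I)
    (R₀ : Matrix (Fin 3) (Fin 3) ℝ) (hR₀ : R₀ᵀ * R₀ = 1) (hR₀det : R₀.det = 1)
    (y₀ : Fin 3 → ℝ) :
    (∀ (R : Matrix (Fin 3) (Fin 3) ℝ), Rᵀ * R = 1 → R.det = 1 →
      ∀ (y : Fin 3 → ℝ) (Rdot : Matrix (Fin 3) (Fin 3) ℝ) (ydot : Fin 3 → ℝ),
        heavyTopL m M l g χ I (R₀ * R) (R₀ *ᵥ y + y₀) (R₀ * Rdot) (R₀ *ᵥ ydot)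
          = heavyTopL m M l g χ I R y Rdot ydot)
    ↔ (R₀ᵀ *ᵥ ![(0 : ℝ), 0, 1] = ![(0 : ℝ), 0, 1] ∧ y₀ ⬝ᵥ ![(0 : ℝ), 0, 1] = 0) :=
  heavyTopL_invariant_iff_general m M l g hm hM hg χ I R₀ hR₀ y₀
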